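/- There exist constants a_{n,m} and b_{n,m} such that for all nonzero ξ, η ∈ V*, the trace of σ(ξ)σ(η) on Λᵐ V* equals a_{n,m}·⟨ξ,η⟩²/(|ξ|²|η|²) + b_{n,m}, where σ(ξ) = |ξ|^{−2}(ε(ξ)ι(ξ) − ι(ξ)ε(ξ)); moreover b_{n,m} = C(n−2,m−2) + C(n−2,m) − 2·C(n−2,m−1) and a_{n,m} = C(n,m) − b_{n,m}. -/

import Mathlib

noncomputable section

open ExteriorAlgebra
open scoped RealInnerProductSpace

abbrev Vn (n : ℕ) := EuclideanSpace ℝ (Fin n)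

variable {n : ℕ}

def eps (ξ : Vn n) : ExteriorAlgebra ℝ (Vn n) →ₗ[ℝ] ExteriorAlgebra ℝ (Vn n) :=
  LinearMap.mulLeft ℝ (ExteriorAlgebra.ι ℝ ξ)

def iot (ξ : Vn n) : ExteriorAlgebra ℝ (Vn n) →ₗ[ℝ] ExteriorAlgebra ℝ (Vn n) :=
  CliffordAlgebra.contractLeft (Q := (0 : QuadraticForm ℝ (Vn n)))
    (innerSL ℝ ξ).toLinearMap

lemma eps_mem (ξ : Vn n) (m : ℕ) :
    ∀ x ∈ ⋀[ℝ]^m (Vn n), eps ξ x ∈ ⋀[ℝ]^(m+1) (Vn n) := by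
  intro x hx
  rw [exteriorPower, pow_succ']
  exact Submodule.mul_mem_mul ⟨ξ, rfl⟩ hx

lemma iot_zero_mem (ξ : Vn n) :
    ∀ x ∈ ⋀[ℝ]^0 (Vn n), iot ξ x = 0 := by
  intro x hx
  rw [exteriorPower, pow_zero, Submodule.one_eq_range] at hx
  obtain ⟨r, rfl⟩ := hx
  exact CliffordAlgebra.contractLeft_algebraMap
    (Q := (0 : QuadraticForm ℝ (Vn n))) (innerSL ℝ ξ).toLinearMap r

lemma iot_mem (ξ : Vn n) (m : ℕ) :
    ∀ x ∈ ⋀[ℝ]^(m+1) (Vn n), iot ξ x ∈ ⋀[ℝ]^m (Vn n) := by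
  induction m with
  | zero =>
    intro x hx
    rw [exteriorPower, pow_one] at hx
    obtain ⟨v, rfl⟩ := hx
    rw [iot, CliffordAlgebra.contractLeft_ι]
    exact Submodule.algebraMap_mem _
  | succ k ih =>
    intro x hx
    rw [exteriorPower, pow_succ'] at hx
    refine Submodule.mul_induction_on hx ?_ ?_
    · rintro a ⟨v, rfl⟩ b hb
      rw [iot, CliffordAlgebra.contractLeft_ι_mul]
      refine sub_mem (Submodule.smul_mem _ _ hb) ?_
      rw [exteriorPower, pow_succ']
      exact Submodule.mul_mem_mul ⟨v, rfl⟩ (ih b hb)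
    · intro x y hx hy
      rw [map_add]
      exact add_mem hx hy

/-- `S(ξ) = ε(ξ)ι(ξ) − ι(ξ)ε(ξ)`. -/
def SOp (ξ : Vn n) : ExteriorAlgebra ℝ (Vn n) →ₗ[ℝ] ExteriorAlgebra ℝ (Vn n) :=
  eps ξ ∘ₗ iot ξ - iot ξ ∘ₗ eps ξ

lemma SOp_mem (ξ : Vn n) (m : ℕ) :
    ∀ x ∈ ⋀[ℝ]^m (Vn n), SOp ξ x ∈ ⋀[ℝ]^m (Vn n) := by
  intro x hx
  have h2 : iot ξ (eps ξ x) ∈ ⋀[ℝ]^m (Vn n) := iot_mem ξ m _ (eps_mem ξ m x hx)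
  have h1 : eps ξ (iot ξ x) ∈ ⋀[ℝ]^m (Vn n) := by
    match m with
    | 0 => rw [iot_zero_mem ξ x hx, map_zero]; exact Submodule.zero_mem _
    | k+1 => exact eps_mem ξ k _ (iot_mem ξ k x hx)
  simpa [SOp, LinearMap.sub_apply, LinearMap.comp_apply] using sub_mem h1 h2

/-- `S(ξ)` restricted to `m`-forms. -/
def SRes (ξ : Vn n) (m : ℕ) : ⋀[ℝ]^m (Vn n) →ₗ[ℝ] ⋀[ℝ]^m (Vn n) :=
  (SOp ξ).restrict (SOp_mem ξ m)

/-- The leading symbol `σ(ξ) = |ξ|⁻²(ε(ξ)ι(ξ) − ι(ξ)ε(ξ))`. -/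
def sigmaOp (ξ : Vn n) : ExteriorAlgebra ℝ (Vn n) →ₗ[ℝ] ExteriorAlgebra ℝ (Vn n) :=
  (‖ξ‖ ^ 2)⁻¹ • SOp ξ

lemma sigmaOp_mem (ξ : Vn n) (m : ℕ) :
    ∀ x ∈ ⋀[ℝ]^m (Vn n), sigmaOp ξ x ∈ ⋀[ℝ]^m (Vn n) := by
  intro x hx
  simpa [sigmaOp] using Submodule.smul_mem _ _ (SOp_mem ξ m x hx)

/-- `σ(ξ)` restricted to `m`-forms. -/
def sigmaR (ξ : Vn n) (m : ℕ) : ⋀[ℝ]^m (Vn n) →ₗ[ℝ] ⋀[ℝ]^m (Vn n) :=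
  (sigmaOp ξ).restrict (sigmaOp_mem ξ m)

/-- `ε(ξ₁)ι(ξ₂)ε(η₁)ι(η₂)`. -/
def quad (ξ₁ ξ₂ η₁ η₂ : Vn n) : ExteriorAlgebra ℝ (Vn n) →ₗ[ℝ] ExteriorAlgebra ℝ (Vn n) :=
  eps ξ₁ ∘ₗ iot ξ₂ ∘ₗ eps η₁ ∘ₗ iot η₂

lemma quad_mem (ξ₁ ξ₂ η₁ η₂ : Vn n) (m : ℕ) :
    ∀ x ∈ ⋀[ℝ]^m (Vn n), quad ξ₁ ξ₂ η₁ η₂ x ∈ ⋀[ℝ]^m (Vn n) := by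
  intro x hx
  have hq : quad ξ₁ ξ₂ η₁ η₂ x = eps ξ₁ (iot ξ₂ (eps η₁ (iot η₂ x))) := rfl
  match m with
  | 0 =>
    rw [hq, iot_zero_mem η₂ x hx]
    simp only [map_zero]
    exact Submodule.zero_mem _
  | k+1 =>
    rw [hq]
    exact eps_mem _ k _ (iot_mem _ k _ (eps_mem _ k _ (iot_mem _ k x hx)))

/-- `ε(ξ₁)ι(ξ₂)ε(η₁)ι(η₂)` restricted to `m`-forms. -/
def quadR (ξ₁ ξ₂ η₁ η₂ : Vn n) (m : ℕ) : ⋀[ℝ]^m (Vn n) →ₗ[ℝ] ⋀[ℝ]^m (Vn n) :=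
  (quad ξ₁ ξ₂ η₁ η₂).restrict (quad_mem ξ₁ ξ₂ η₁ η₂ m)


/-- The constant `b_{n,m} = C(n−2,m−2) + C(n−2,m) − 2 C(n−2,m−1)` (with the convention
`C(n,k) = 0` for `k < 0`). -/
noncomputable def bConst (n m : ℕ) : ℝ :=
  (if 2 ≤ m then ((n - 2).choose (m - 2) : ℝ) else 0) + ((n - 2).choose m : ℝ)
    - 2 * (if 1 ≤ m then ((n - 2).choose (m - 1) : ℝ) else 0)

/-!
On forms, `ι(η)ε(ξ) + ε(ξ)ι(η) = ⟪η, ξ⟫`, so `|ξ|² σ(ξ) = 2 ε(ξ)ι(ξ) − |ξ|²` and the trace of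
`σ(ξ)σ(η)` on `Λᵐ` is a combination of `dim Λᵐ = C(n, m)` and the traces of `ε(ξ)ι(ξ)`,
`ε(η)ι(η)` and `ε(ξ)ι(ξ)ε(η)ι(η)`. Each of these operators on `Λᵐ⁺¹` starts with some `ε(a)`,
which maps `Λᵐ` to `Λᵐ⁺¹`; moving it to the other end does not change the trace, and commuting it
back past the next `ι` by the anticommutation relation expresses the trace through traces of the
same kind on `Λᵐ`. The resulting recursions in `m` are solved by binomial coefficients.
-/

/-- `map_sub` does not rewrite `trace ℝ (⋀[ℝ]^m _)`: it does not find the subtraction of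
endomorphisms of this submodule through the instances it searches. -/
lemma LinearMap.trace_sub {M : Type*} [AddCommGroup M] [Module ℝ M] (f g : M →ₗ[ℝ] M) :
    trace ℝ M (f - g) = trace ℝ M f - trace ℝ M g :=
  map_sub _ f g

lemma finrank_exteriorPower_Vn (m : ℕ) : Module.finrank ℝ (⋀[ℝ]^m (Vn n)) = n.choose m := by
  rw [exteriorPower.finrank_eq, finrank_euclideanSpace_fin]

lemma iot_eps (ξ η : Vn n) (x : ExteriorAlgebra ℝ (Vn n)) :
    iot η (eps ξ x) = ⟪η, ξ⟫ • x - eps ξ (iot η x) := by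
  simpa [eps, iot] using CliffordAlgebra.contractLeft_ι_mul
    (Q := (0 : QuadraticForm ℝ (Vn n))) (d := (innerSL ℝ η).toLinearMap) ξ x

def epsR (ξ : Vn n) (m : ℕ) : ⋀[ℝ]^m (Vn n) →ₗ[ℝ] ⋀[ℝ]^(m + 1) (Vn n) :=
  (eps ξ).restrict (eps_mem ξ m)

def iotR (ξ : Vn n) (m : ℕ) : ⋀[ℝ]^(m + 1) (Vn n) →ₗ[ℝ] ⋀[ℝ]^m (Vn n) :=
  (iot ξ).restrict (iot_mem ξ m)

lemma eps_iot_mem (ξ η : Vn n) (m : ℕ) :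
    ∀ x ∈ ⋀[ℝ]^m (Vn n), eps ξ (iot η x) ∈ ⋀[ℝ]^m (Vn n) := by
  intro x hx
  match m with
  | 0 => simp [iot_zero_mem η x hx]
  | k + 1 => exact eps_mem ξ k _ (iot_mem η k x hx)

def epsIotR (ξ η : Vn n) (m : ℕ) : ⋀[ℝ]^m (Vn n) →ₗ[ℝ] ⋀[ℝ]^m (Vn n) :=
  (eps ξ ∘ₗ iot η).restrict (eps_iot_mem ξ η m)

lemma epsIotR_zero (ξ η : Vn n) : epsIotR ξ η 0 = 0 :=
  LinearMap.ext fun x => Subtype.ext <| by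
    simp [epsIotR, iot_zero_mem η x x.2]

lemma quadR_zero (a b c d : Vn n) : quadR a b c d 0 = 0 :=
  LinearMap.ext fun x => Subtype.ext <| by
    simp [quadR, quad, iot_zero_mem d x x.2]

lemma epsR_comp_iotR (ξ η : Vn n) (m : ℕ) :
    epsR ξ m ∘ₗ iotR η m = epsIotR ξ η (m + 1) :=
  rfl

lemma iotR_comp_epsR (ξ η : Vn n) (m : ℕ) :
    iotR η m ∘ₗ epsR ξ m = ⟪η, ξ⟫ • LinearMap.id - epsIotR ξ η m :=
  LinearMap.ext fun x => Subtype.ext (iot_eps ξ η x)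

lemma epsIotR_comp_epsIotR (a b c d : Vn n) (m : ℕ) :
    epsIotR a b m ∘ₗ epsIotR c d m = quadR a b c d m :=
  rfl

lemma quadR_succ (a b c d : Vn n) (m : ℕ) :
    quadR a b c d (m + 1)
      = ⟪b, c⟫ • epsIotR a d (m + 1) - epsR a m ∘ₗ epsIotR c b m ∘ₗ iotR d m :=
  LinearMap.ext fun x => Subtype.ext <| by
    simp [quadR, quad, epsR, iotR, epsIotR, iot_eps]

lemma epsIotR_comp_iotR_comp_epsR (a b c d : Vn n) (m : ℕ) :
    (epsIotR c b m ∘ₗ iotR d m) ∘ₗ epsR a m = ⟪d, a⟫ • epsIotR c b m - quadR c b a d m :=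
  LinearMap.ext fun x => Subtype.ext <| by
    simp [quadR, quad, epsR, iotR, epsIotR, iot_eps]

-- The recursions satisfied by the traces of `ε(a)ι(b)` and `ε(a)ι(b)ε(c)ι(d)` on `Λᵐ`; the
-- solutions are `C(n - 1, m - 1)` and `C(n - 2, m - 2)`, read as `0` for `m < 1`, resp. `m < 2`.
def epsIotCoeff (n : ℕ) : ℕ → ℝ
  | 0 => 0
  | m + 1 => n.choose m - epsIotCoeff n m

def quadCoeff (n : ℕ) : ℕ → ℝ
  | 0 => 0
  | m + 1 => epsIotCoeff n m - quadCoeff n m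

lemma trace_epsIotR (ξ η : Vn n) (m : ℕ) :
    LinearMap.trace ℝ _ (epsIotR ξ η m) = ⟪ξ, η⟫ * epsIotCoeff n m := by
  induction m with
  | zero => simp [epsIotR_zero, epsIotCoeff]
  | succ m ih =>
    rw [← epsR_comp_iotR, LinearMap.trace_comp_comm', iotR_comp_epsR, LinearMap.trace_sub,
      map_smul, LinearMap.trace_id, finrank_exteriorPower_Vn, ih, epsIotCoeff, real_inner_comm,
      smul_eq_mul]
    ring

lemma trace_quadR (a b c d : Vn n) (m : ℕ) :
    LinearMap.trace ℝ _ (quadR a b c d m)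
      = ⟪a, d⟫ * ⟪b, c⟫ * epsIotCoeff n m
        + (⟪a, b⟫ * ⟪c, d⟫ - ⟪a, d⟫ * ⟪b, c⟫) * quadCoeff n m := by
  induction m generalizing a c with
  | zero => simp [quadR_zero, epsIotCoeff, quadCoeff]
  | succ m ih =>
    rw [quadR_succ, LinearMap.trace_sub, map_smul, LinearMap.trace_comp_comm',
      epsIotR_comp_iotR_comp_epsR, LinearMap.trace_sub, map_smul, trace_epsIotR, trace_epsIotR,
      ih, quadCoeff, epsIotCoeff]
    simp only [smul_eq_mul, real_inner_comm a d, real_inner_comm a b, real_inner_comm c b]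
    ring

lemma SRes_eq (ξ : Vn n) (m : ℕ) :
    SRes ξ m = (2 : ℝ) • epsIotR ξ ξ m - ‖ξ‖ ^ 2 • LinearMap.id :=
  LinearMap.ext fun x => Subtype.ext <| by
    simp only [SRes, SOp, epsIotR, LinearMap.coe_restrict_apply, LinearMap.sub_apply,
      LinearMap.comp_apply, LinearMap.smul_apply, LinearMap.id_apply, AddSubgroupClass.coe_sub,
      SetLike.val_smul, iot_eps, real_inner_self_eq_norm_sq]
    module

lemma sigmaR_eq (ξ : Vn n) (m : ℕ) : sigmaR ξ m = (‖ξ‖ ^ 2)⁻¹ • SRes ξ m :=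
  rfl

lemma trace_SRes_comp_SRes (ξ η : Vn n) (m : ℕ) :
    LinearMap.trace ℝ _ (SRes ξ m ∘ₗ SRes η m)
      = n.choose m * (‖ξ‖ ^ 2 * ‖η‖ ^ 2)
        + 4 * (⟪ξ, η⟫ ^ 2 - ‖ξ‖ ^ 2 * ‖η‖ ^ 2) * quadCoeff n (m + 1) := by
  simp only [SRes_eq, LinearMap.sub_comp, LinearMap.comp_sub, LinearMap.smul_comp,
    LinearMap.comp_smul, LinearMap.id_comp, LinearMap.comp_id, epsIotR_comp_epsIotR,
    LinearMap.trace_sub, map_smul, trace_quadR, trace_epsIotR, LinearMap.trace_id,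
    finrank_exteriorPower_Vn, real_inner_self_eq_norm_sq, quadCoeff, smul_eq_mul]
  ring

lemma epsIotCoeff_succ_succ (n m : ℕ) : epsIotCoeff (n + 1) (m + 1) = n.choose m := by
  induction m with
  | zero => simp [epsIotCoeff]
  | succ m ih =>
    rw [epsIotCoeff, ih, Nat.choose_succ_succ]
    push_cast
    ring

lemma quadCoeff_one (n : ℕ) : quadCoeff n 1 = 0 := by
  simp [quadCoeff, epsIotCoeff]

lemma quadCoeff_add_two_add_two (n m : ℕ) : quadCoeff (n + 2) (m + 2) = n.choose m := by
  induction m with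
  | zero => simp [quadCoeff, epsIotCoeff]
  | succ m ih =>
    rw [quadCoeff, ih, epsIotCoeff_succ_succ, Nat.choose_succ_succ]
    push_cast
    ring

lemma bConst_eq {n : ℕ} (hn : 2 ≤ n) (m : ℕ) :
    bConst n m = n.choose m - 4 * quadCoeff n (m + 1) := by
  obtain ⟨n, rfl⟩ : ∃ k, n = k + 2 := ⟨n - 2, by omega⟩
  rcases m with _ | _ | m
  · simp [bConst, quadCoeff_one]
  · norm_num [bConst, quadCoeff_add_two_add_two]
    ring
  · simp [bConst, quadCoeff_add_two_add_two, Nat.choose_succ_succ]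
    ring

/-- `tr(σ(ξ)σ(η)) = a_{n,m} ⟨ξ,η⟩²/(|ξ|²|η|²) + b_{n,m}` on `Λᵐ`, with
`b_{n,m} = C(n−2,m−2) + C(n−2,m) − 2 C(n−2,m−1)` and `a_{n,m} = C(n,m) − b_{n,m}`. -/
theorem statement6 {n : ℕ} (hn : 2 ≤ n) (m : ℕ) (ξ η : Vn n) (hξ : ξ ≠ 0) (hη : η ≠ 0) :
    LinearMap.trace ℝ (⋀[ℝ]^m (Vn n)) ((sigmaR ξ m) ∘ₗ (sigmaR η m))
      = ((n.choose m : ℝ) - bConst n m) * (⟪ξ, η⟫ ^ 2 / (‖ξ‖ ^ 2 * ‖η‖ ^ 2))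
        + bConst n m := by
  have hξ' : ‖ξ‖ ≠ 0 := norm_ne_zero_iff.mpr hξ
  have hη' : ‖η‖ ≠ 0 := norm_ne_zero_iff.mpr hη
  rw [sigmaR_eq, sigmaR_eq, LinearMap.smul_comp, LinearMap.comp_smul, map_smul, map_smul,
    trace_SRes_comp_SRes, bConst_eq hn, smul_eq_mul, smul_eq_mul]
  field_simp
  ring
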